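/- arXiv:1905.07181 — 8 statements merged into one kernel-verified Lean document; each statement's English description precedes it below -/
import Mathlib

section
/- Let C be a category, J a directed partially ordered set, and let X = (X_λ, p_{λλ'}, Λ) and Y = (Y_μ, q_{μμ'}, M) be inverse systems in C with M a cofinite directed partially ordered set. Then every morphism f = [(f, f_μ^j)] : X → Y of pro^J-C admits a simple representative (f', f'_μ^j) : X → Y. -/
open CategoryTheory

universe t w v u

/-- An inverse system in a category `C` over a directed preordered index type `Λ`:
objects `obj l` and bonding morphisms `bond : obj l' ⟶ obj l` for `l ≤ l'`. -/
structure InvSys (C : Type u) [Category.{v} C] (Λ : Type w) [Preorder Λ] where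
  obj : Λ → C
  bond : ∀ {l l' : Λ}, l ≤ l' → (obj l' ⟶ obj l)
  bond_refl : ∀ l : Λ, bond (le_refl l) = 𝟙 (obj l)
  bond_comp : ∀ {l l' l'' : Λ} (h : l ≤ l') (h' : l' ≤ l''),
    bond h' ≫ bond h = bond (h.trans h')

variable {C : Type u} [Category.{v} C]

/-- `(f, F)` is a `J`-morphism of inverse systems `X → Y`. -/
def IsJMor (J : Type t) [Preorder J] {Λ M : Type w} [Preorder Λ] [Preorder M]
    (X : InvSys C Λ) (Y : InvSys C M) (f : M → Λ)
    (F : ∀ μ : M, J → (X.obj (f μ) ⟶ Y.obj μ)) : Prop :=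
  ∀ ⦃μ μ' : M⦄ (h : μ ≤ μ'), ∃ (l : Λ) (hl : f μ ≤ l) (hl' : f μ' ≤ l) (j : J),
    ∀ j' : J, j ≤ j' →
      X.bond hl ≫ F μ j' = X.bond hl' ≫ F μ' j' ≫ Y.bond h

/-- `(f, F)` is a commutative `J`-morphism: the defining equality holds for every `j ∈ J`. -/
def IsCommJMor (J : Type t) [Preorder J] {Λ M : Type w} [Preorder Λ] [Preorder M]
    (X : InvSys C Λ) (Y : InvSys C M) (f : M → Λ)
    (F : ∀ μ : M, J → (X.obj (f μ) ⟶ Y.obj μ)) : Prop :=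
  ∀ ⦃μ μ' : M⦄ (h : μ ≤ μ'), ∃ (l : Λ) (hl : f μ ≤ l) (hl' : f μ' ≤ l),
    ∀ j : J, X.bond hl ≫ F μ j = X.bond hl' ≫ F μ' j ≫ Y.bond h

/-- A bundled `J`-morphism of inverse systems. -/
structure JMor (J : Type t) [Preorder J] {Λ M : Type w} [Preorder Λ] [Preorder M]
    (X : InvSys C Λ) (Y : InvSys C M) where
  idx : M → Λ
  app : ∀ μ : M, J → (X.obj (idx μ) ⟶ Y.obj μ)
  cond : IsJMor J X Y idx app

/-- The equivalence relation `∼` on `J`-morphisms `X → Y`. -/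
def JMorEquiv (J : Type t) [Preorder J] {Λ M : Type w} [Preorder Λ] [Preorder M]
    (X : InvSys C Λ) (Y : InvSys C M) (f g : JMor J X Y) : Prop :=
  ∀ μ : M, ∃ (l : Λ) (hl : f.idx μ ≤ l) (hl' : g.idx μ ≤ l) (j : J),
    ∀ j' : J, j ≤ j' → X.bond hl ≫ f.app μ j' = X.bond hl' ≫ g.app μ j'

/-- `(f, F)` is a simple `J`-morphism: the index function is increasing and the
defining equality may always be realised with `λ = f(μ')`. -/
def IsSimpleJMor (J : Type t) [Preorder J] {Λ M : Type w} [Preorder Λ] [Preorder M]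
    {X : InvSys C Λ} {Y : InvSys C M} (f : JMor J X Y) : Prop :=
  ∃ hmono : Monotone f.idx, ∀ ⦃μ μ' : M⦄ (h : μ ≤ μ'), ∃ j : J, ∀ j' : J, j ≤ j' →
    X.bond (hmono h) ≫ f.app μ j' = f.app μ' j' ≫ Y.bond h

/-- Lemma 6: if the index set `M` of `Y` is a cofinite directed
partially ordered set, then every morphism `[(f, f_μ^j)] : X → Y` of `pro^J-C`
admits a simple representative. -/
theorem exists_simple_representative {C : Type u} [Category.{v} C]
    {J : Type t} [PartialOrder J] [IsDirected J (· ≤ ·)] [Nonempty J]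
    {Λ M : Type w} [Preorder Λ] [IsDirected Λ (· ≤ ·)] [Nonempty Λ]
    [Preorder M] [IsDirected M (· ≤ ·)] [Nonempty M]
    (hanti : ∀ a b : M, a ≤ b → b ≤ a → a = b)
    (hcofinite : ∀ μ : M, {μ' : M | μ' < μ}.Finite)
    (X : InvSys C Λ) (Y : InvSys C M) (f : JMor J X Y) :
    ∃ f' : JMor J X Y, JMorEquiv J X Y f f' ∧ IsSimpleJMor J f' := by
  classical
  -- well-foundedness of < on M from cofiniteness
  have hwf : WellFounded ((· < ·) : M → M → Prop) := by
    constructor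
    intro μ0
    have key : ∀ (n : ℕ) (μ : M), (hcofinite μ).toFinset.card ≤ n → Acc (· < ·) μ := by
      intro n
      induction n with
      | zero =>
        intro μ hc
        constructor
        intro ν hν
        exfalso
        have h1 : ν ∈ (hcofinite μ).toFinset := (Set.Finite.mem_toFinset _).mpr hν
        have h2 : (hcofinite μ).toFinset = ∅ := Finset.card_eq_zero.mp (Nat.le_zero.mp hc)
        rw [h2] at h1
        exact absurd h1 (Finset.notMem_empty ν)
      | succ n ih =>
        intro μ hc
        constructor
        intro ν hν
        apply ih
        have hsub : (hcofinite ν).toFinset ⊆ (hcofinite μ).toFinset := by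
          intro ρ hρ
          rw [Set.Finite.mem_toFinset] at hρ ⊢
          exact lt_trans hρ hν
        have hν' : ν ∈ (hcofinite μ).toFinset := (Set.Finite.mem_toFinset _).mpr hν
        have hνnot : ν ∉ (hcofinite ν).toFinset := by
          rw [Set.Finite.mem_toFinset]
          exact lt_irrefl ν
        have hlt : (hcofinite ν).toFinset.card < (hcofinite μ).toFinset.card :=
          Finset.card_lt_card ((Finset.ssubset_iff_of_subset hsub).mpr ⟨ν, hν', hνnot⟩)
        omega
    exact key _ μ0 le_rfl
  -- choose the data from the J-morphism condition
  choose L hL hL' j0 hH using fun (ν μ : M) (h : ν ≤ μ) => f.cond h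
  -- the recursive step producing the new index function
  have hex : ∀ (μ : M) (rec : ∀ ν, ν < μ → Λ), ∃ b : Λ,
      f.idx μ ≤ b ∧ ∀ ν (h : ν < μ), rec ν h ≤ b ∧ L ν μ h.le ≤ b := by
    intro μ rec
    let s : Finset Λ := insert (f.idx μ)
      (((hcofinite μ).toFinset.attach.image
          (fun x => rec x.1 ((Set.Finite.mem_toFinset (hcofinite μ)).mp x.2))) ∪
       ((hcofinite μ).toFinset.attach.image
          (fun x => L x.1 μ ((Set.Finite.mem_toFinset (hcofinite μ)).mp x.2).le)))
    obtain ⟨b, hb⟩ := s.exists_le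
    refine ⟨b, hb _ (Finset.mem_insert_self _ _), fun ν h => ⟨?_, ?_⟩⟩
    · apply hb
      apply Finset.mem_insert_of_mem
      apply Finset.mem_union_left
      exact Finset.mem_image.mpr
        ⟨⟨ν, (Set.Finite.mem_toFinset (hcofinite μ)).mpr h⟩, Finset.mem_attach _ _, rfl⟩
    · apply hb
      apply Finset.mem_insert_of_mem
      apply Finset.mem_union_right
      exact Finset.mem_image.mpr
        ⟨⟨ν, (Set.Finite.mem_toFinset (hcofinite μ)).mpr h⟩, Finset.mem_attach _ _, rfl⟩
  choose Φ hΦ1 hΦ2 using hex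
  set g : M → Λ := hwf.fix Φ with hgdef
  have hfix : ∀ μ, g μ = Φ μ (fun ν _ => g ν) := fun μ => hwf.fix_eq Φ μ
  have hg1 : ∀ μ, f.idx μ ≤ g μ := fun μ => by
    rw [hfix μ]; exact hΦ1 μ (fun ν _ => g ν)
  have hg2 : ∀ ⦃ν μ : M⦄, ν < μ → g ν ≤ g μ := fun ν μ h => by
    rw [hfix μ]; exact (hΦ2 μ (fun ν _ => g ν) ν h).1
  have hg3 : ∀ ⦃ν μ : M⦄ (h : ν < μ), L ν μ h.le ≤ g μ := fun ν μ h => by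
    rw [hfix μ]; exact (hΦ2 μ (fun ν _ => g ν) ν h).2
  have gmono : Monotone g := by
    intro ν μ h
    by_cases hlt : ν < μ
    · exact hg2 hlt
    · have hle : μ ≤ ν := by
        by_contra hc
        exact hlt (lt_iff_le_not_ge.mpr ⟨h, hc⟩)
      exact le_of_eq (congrArg g (hanti ν μ h hle))
  -- the key commutation property
  have key : ∀ ⦃ν μ : M⦄ (h : ν ≤ μ), ∃ j : J, ∀ j' : J, j ≤ j' →
      X.bond (gmono h) ≫ (X.bond (hg1 ν) ≫ f.app ν j') =
      (X.bond (hg1 μ) ≫ f.app μ j') ≫ Y.bond h := by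
    intro ν μ h
    by_cases hlt : ν < μ
    · refine ⟨j0 ν μ h, fun j' hj' => ?_⟩
      calc X.bond (gmono h) ≫ (X.bond (hg1 ν) ≫ f.app ν j')
          = (X.bond (gmono h) ≫ X.bond (hg1 ν)) ≫ f.app ν j' := by
            rw [Category.assoc]
        _ = X.bond ((hL ν μ h).trans (hg3 hlt)) ≫ f.app ν j' := by
            rw [X.bond_comp]
        _ = (X.bond (hg3 hlt) ≫ X.bond (hL ν μ h)) ≫ f.app ν j' := by
            rw [X.bond_comp]
        _ = X.bond (hg3 hlt) ≫ (X.bond (hL ν μ h) ≫ f.app ν j') := by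
            rw [Category.assoc]
        _ = X.bond (hg3 hlt) ≫ (X.bond (hL' ν μ h) ≫ f.app μ j' ≫ Y.bond h) := by
            rw [hH ν μ h j' hj']
        _ = (X.bond (hg1 μ) ≫ f.app μ j') ≫ Y.bond h := by
            simp only [← Category.assoc, X.bond_comp]
    · have hle : μ ≤ ν := by
        by_contra hc
        exact hlt (lt_iff_le_not_ge.mpr ⟨h, hc⟩)
      have heq : ν = μ := hanti ν μ h hle
      subst heq
      refine ⟨Classical.arbitrary J, fun j' _ => ?_⟩
      have hX : X.bond (gmono h) = 𝟙 (X.obj (g ν)) := X.bond_refl (g ν)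
      have hY : Y.bond h = 𝟙 (Y.obj ν) := Y.bond_refl ν
      rw [hX, hY, Category.id_comp, Category.comp_id]
  refine ⟨⟨g, fun μ j => X.bond (hg1 μ) ≫ f.app μ j, ?_⟩, ?_, ?_⟩
  · -- IsJMor condition
    intro μ μ' h
    obtain ⟨j, hj⟩ := key h
    refine ⟨g μ', gmono h, le_rfl, j, fun j' hj' => ?_⟩
    rw [X.bond_refl, Category.id_comp]
    exact hj j' hj'
  · -- equivalence with f
    intro μ
    refine ⟨g μ, hg1 μ, le_rfl, Classical.arbitrary J, fun j' _ => ?_⟩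
    rw [X.bond_refl, Category.id_comp]
  · -- simplicity
    exact ⟨gmono, fun ν μ h => key h⟩
end

section
/- Let C be a category and J a directed partially ordered set. Every inverse system X in C is isomorphic, in the category pro^J-C, to an inverse system X' indexed by a cofinite directed partially ordered set. -/
open CategoryTheory

universe t w v u

variable {C : Type u} [Category.{v} C]

/-- Composition of `J`-morphisms: `(f.comp g) = (f ∘ g, g_ν^j ∘ f_{g(ν)}^j)`. -/
def JMor.comp (J : Type t) [Preorder J] [IsDirected J (· ≤ ·)]
    {Λ M N : Type w} [Preorder Λ] [IsDirected Λ (· ≤ ·)]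
    [Preorder M] [IsDirected M (· ≤ ·)] [Preorder N]
    {X : InvSys C Λ} {Y : InvSys C M} {Z : InvSys C N}
    (f : JMor J X Y) (g : JMor J Y Z) : JMor J X Z where
  idx := f.idx ∘ g.idx
  app := fun ν j => f.app (g.idx ν) j ≫ g.app ν j
  cond := by
    intro ν ν' h
    obtain ⟨μ, hμ, hμ', j₀, e₀⟩ := g.cond h
    obtain ⟨l₁, h₁a, h₁b, j₁, e₁⟩ := f.cond hμ
    obtain ⟨l₂, h₂a, h₂b, j₂, e₂⟩ := f.cond hμ'
    obtain ⟨l, hl₁, hl₂⟩ := directed_of (· ≤ ·) l₁ l₂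
    obtain ⟨ja, hja₀, hja₁⟩ := directed_of (· ≤ ·) j₀ j₁
    obtain ⟨j, hj, hj₂⟩ := directed_of (· ≤ ·) ja j₂
    refine ⟨l, h₁a.trans hl₁, h₂a.trans hl₂, j, fun j' hj' => ?_⟩
    have E0 := e₀ j' ((hja₀.trans hj).trans hj')
    have E1 := e₁ j' ((hja₁.trans hj).trans hj')
    have E2 := e₂ j' (hj₂.trans hj')
    calc X.bond (h₁a.trans hl₁) ≫ f.app (g.idx ν) j' ≫ g.app ν j'
        = X.bond hl₁ ≫ (X.bond h₁a ≫ f.app (g.idx ν) j') ≫ g.app ν j' := by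
          rw [← X.bond_comp h₁a hl₁]; simp only [Category.assoc]
      _ = X.bond hl₁ ≫ (X.bond h₁b ≫ f.app μ j' ≫ Y.bond hμ) ≫ g.app ν j' := by rw [E1]
      _ = X.bond (h₁b.trans hl₁) ≫ f.app μ j' ≫ Y.bond hμ ≫ g.app ν j' := by
          rw [← X.bond_comp h₁b hl₁]; simp only [Category.assoc]
      _ = X.bond (h₂b.trans hl₂) ≫ f.app μ j' ≫ Y.bond hμ' ≫ g.app ν' j' ≫ Z.bond h := by
          rw [E0]
      _ = X.bond hl₂ ≫ (X.bond h₂b ≫ f.app μ j' ≫ Y.bond hμ') ≫ g.app ν' j' ≫ Z.bond h := by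
          rw [← X.bond_comp h₂b hl₂]; simp only [Category.assoc]
      _ = X.bond hl₂ ≫ (X.bond h₂a ≫ f.app (g.idx ν') j') ≫ g.app ν' j' ≫ Z.bond h := by
          rw [E2]
      _ = X.bond (h₂a.trans hl₂) ≫ (f.app (g.idx ν') j' ≫ g.app ν' j') ≫ Z.bond h := by
          rw [← X.bond_comp h₂a hl₂]; simp only [Category.assoc]

/-- The identity `J`-morphism. -/
def JMor.id (J : Type t) [Preorder J] [Nonempty J] {Λ : Type w} [Preorder Λ]
    (X : InvSys C Λ) : JMor J X X where
  idx := _root_.id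
  app := fun l _ => 𝟙 (X.obj l)
  cond := by
    intro l l' h
    exact ⟨l', h, le_refl _, Classical.arbitrary J, fun j _ => by
      simp [X.bond_refl]⟩

/-- The setoid of `J`-morphisms `X → Y` under the relation `∼`. -/
instance jmorSetoid (J : Type t) [Preorder J] [IsDirected J (· ≤ ·)] [Nonempty J]
    {Λ M : Type w} [Preorder Λ] [IsDirected Λ (· ≤ ·)] [Preorder M]
    (X : InvSys C Λ) (Y : InvSys C M) : Setoid (JMor J X Y) :=
  ⟨JMorEquiv J X Y, by
    constructor
    · intro f μ
      exact ⟨f.idx μ, le_refl _, le_refl _, Classical.arbitrary J, fun j _ => rfl⟩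
    · intro f g hfg μ
      obtain ⟨l, hl, hl', j, e⟩ := hfg μ
      exact ⟨l, hl', hl, j, fun j' hj => (e j' hj).symm⟩
    · intro f g k hfg hgk μ
      obtain ⟨l₁, h₁, h₁', j₁, e₁⟩ := hfg μ
      obtain ⟨l₂, h₂, h₂', j₂, e₂⟩ := hgk μ
      obtain ⟨l, hl₁, hl₂⟩ := directed_of (· ≤ ·) l₁ l₂
      obtain ⟨j, hj₁, hj₂⟩ := directed_of (· ≤ ·) j₁ j₂
      refine ⟨l, h₁.trans hl₁, h₂'.trans hl₂, j, fun j' hj => ?_⟩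
      calc X.bond (h₁.trans hl₁) ≫ f.app μ j'
          = X.bond hl₁ ≫ X.bond h₁ ≫ f.app μ j' := by
            rw [← Category.assoc, X.bond_comp]
        _ = X.bond hl₁ ≫ X.bond h₁' ≫ g.app μ j' := by rw [e₁ j' (hj₁.trans hj)]
        _ = X.bond (h₁'.trans hl₁) ≫ g.app μ j' := by
            rw [← Category.assoc, X.bond_comp]
        _ = X.bond hl₂ ≫ X.bond h₂ ≫ g.app μ j' := by
            rw [← Category.assoc, X.bond_comp]
        _ = X.bond hl₂ ≫ X.bond h₂' ≫ k.app μ j' := by rw [e₂ j' (hj₂.trans hj)]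
        _ = X.bond (h₂'.trans hl₂) ≫ k.app μ j' := by
            rw [← Category.assoc, X.bond_comp]⟩

/-- The relation `∼` is compatible with composition. -/
theorem jmorEquiv_comp_congr (J : Type t) [Preorder J] [IsDirected J (· ≤ ·)] [Nonempty J]
    {Λ M N : Type w} [Preorder Λ] [IsDirected Λ (· ≤ ·)]
    [Preorder M] [IsDirected M (· ≤ ·)] [Preorder N]
    {X : InvSys C Λ} {Y : InvSys C M} {Z : InvSys C N}
    {f f' : JMor J X Y} {g g' : JMor J Y Z}
    (hf : JMorEquiv J X Y f f') (hg : JMorEquiv J Y Z g g') :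
    JMorEquiv J X Z (JMor.comp J f g) (JMor.comp J f' g') := by
  refine (jmorSetoid J X Z).iseqv.trans (y := JMor.comp J f' g) ?_ ?_
  · -- f ∼ f' ⇒ f.comp g ∼ f'.comp g
    intro ν
    obtain ⟨l, hl, hl', j, e⟩ := hf (g.idx ν)
    exact ⟨l, hl, hl', j, fun j' hj => by
      show X.bond hl ≫ f.app (g.idx ν) j' ≫ g.app ν j'
          = X.bond hl' ≫ f'.app (g.idx ν) j' ≫ g.app ν j'
      rw [← Category.assoc, e j' hj, Category.assoc]⟩
  · -- g ∼ g' ⇒ f'.comp g ∼ f'.comp g'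
    intro ν
    obtain ⟨μ, hμ, hμ', j₁, e₁⟩ := hg ν
    obtain ⟨l₁, ha, hb, j₂, e₂⟩ := f'.cond hμ
    obtain ⟨l₂, hc, hd, j₃, e₃⟩ := f'.cond hμ'
    obtain ⟨l, hl₁, hl₂⟩ := directed_of (· ≤ ·) l₁ l₂
    obtain ⟨ja, hja₁, hja₂⟩ := directed_of (· ≤ ·) j₁ j₂
    obtain ⟨j, hj, hj₃⟩ := directed_of (· ≤ ·) ja j₃
    refine ⟨l, ha.trans hl₁, hc.trans hl₂, j, fun j' hj' => ?_⟩
    have E1 := e₁ j' ((hja₁.trans hj).trans hj')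
    have E2 := e₂ j' ((hja₂.trans hj).trans hj')
    have E3 := e₃ j' (hj₃.trans hj')
    show X.bond (ha.trans hl₁) ≫ f'.app (g.idx ν) j' ≫ g.app ν j'
        = X.bond (hc.trans hl₂) ≫ f'.app (g'.idx ν) j' ≫ g'.app ν j'
    calc X.bond (ha.trans hl₁) ≫ f'.app (g.idx ν) j' ≫ g.app ν j'
        = X.bond hl₁ ≫ (X.bond ha ≫ f'.app (g.idx ν) j') ≫ g.app ν j' := by
          rw [← X.bond_comp ha hl₁]; simp only [Category.assoc]
      _ = X.bond hl₁ ≫ (X.bond hb ≫ f'.app μ j' ≫ Y.bond hμ) ≫ g.app ν j' := by rw [E2]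
      _ = X.bond (hb.trans hl₁) ≫ f'.app μ j' ≫ Y.bond hμ ≫ g.app ν j' := by
          rw [← X.bond_comp hb hl₁]; simp only [Category.assoc]
      _ = X.bond (hd.trans hl₂) ≫ f'.app μ j' ≫ Y.bond hμ' ≫ g'.app ν j' := by rw [E1]
      _ = X.bond hl₂ ≫ (X.bond hd ≫ f'.app μ j' ≫ Y.bond hμ') ≫ g'.app ν j' := by
          rw [← X.bond_comp hd hl₂]; simp only [Category.assoc]
      _ = X.bond hl₂ ≫ (X.bond hc ≫ f'.app (g'.idx ν) j') ≫ g'.app ν j' := by rw [E3]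
      _ = X.bond (hc.trans hl₂) ≫ f'.app (g'.idx ν) j' ≫ g'.app ν j' := by
          rw [← X.bond_comp hc hl₂]; simp only [Category.assoc]

/-- The hom-set of the enriched pro-category `pro^J-C`. -/
def JHom (J : Type t) [Preorder J] [IsDirected J (· ≤ ·)] [Nonempty J]
    {Λ M : Type w} [Preorder Λ] [IsDirected Λ (· ≤ ·)] [Preorder M]
    (X : InvSys C Λ) (Y : InvSys C M) :=
  Quotient (jmorSetoid J X Y)

/-- Composition in `pro^J-C` (diagrammatic order). -/
def JHom.comp (J : Type t) [Preorder J] [IsDirected J (· ≤ ·)] [Nonempty J]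
    {Λ M N : Type w} [Preorder Λ] [IsDirected Λ (· ≤ ·)]
    [Preorder M] [IsDirected M (· ≤ ·)] [Preorder N]
    {X : InvSys C Λ} {Y : InvSys C M} {Z : InvSys C N}
    (f : JHom J X Y) (g : JHom J Y Z) : JHom J X Z :=
  Quotient.lift₂ (fun f g => (⟦JMor.comp J f g⟧ : JHom J X Z))
    (fun _ _ _ _ hf hg => Quotient.sound (jmorEquiv_comp_congr J hf hg)) f g

/-- The identity morphism of `pro^J-C`. -/
def JHom.id (J : Type t) [Preorder J] [IsDirected J (· ≤ ·)] [Nonempty J]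
    {Λ : Type w} [Preorder Λ] [IsDirected Λ (· ≤ ·)]
    (X : InvSys C Λ) : JHom J X X :=
  ⟦JMor.id J X⟧

/-- `f` is an isomorphism of `pro^J-C`. -/
def IsJIso (J : Type t) [Preorder J] [IsDirected J (· ≤ ·)] [Nonempty J]
    {Λ M : Type w} [Preorder Λ] [IsDirected Λ (· ≤ ·)]
    [Preorder M] [IsDirected M (· ≤ ·)]
    {X : InvSys C Λ} {Y : InvSys C M} (f : JHom J X Y) : Prop :=
  ∃ g : JHom J Y X, JHom.comp J f g = JHom.id J X ∧ JHom.comp J g f = JHom.id J Y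

/-- `X` and `Y` are isomorphic objects of `pro^J-C`. -/
def JIso (J : Type t) [Preorder J] [IsDirected J (· ≤ ·)] [Nonempty J]
    {Λ M : Type w} [Preorder Λ] [IsDirected Λ (· ≤ ·)]
    [Preorder M] [IsDirected M (· ≤ ·)]
    (X : InvSys C Λ) (Y : InvSys C M) : Prop :=
  ∃ f : JHom J X Y, IsJIso J f

/-- A cofinite directed partially ordered set: every element has only finitely
many predecessors. -/
structure CofinitePoset : Type (w + 1) where
  carrier : Type w
  [po : PartialOrder carrier]
  [dir : IsDirected carrier (· ≤ ·)]
  [ne : Nonempty carrier]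
  cofinite : ∀ n : carrier, {m : carrier | m < n}.Finite

attribute [instance] CofinitePoset.po CofinitePoset.dir CofinitePoset.ne

section Aux

open Classical

variable {Λ : Type w} [Preorder Λ] [IsDirected Λ (· ≤ ·)] [Nonempty Λ]

/-- For each finite subset `F` of `Λ`, choose an element `auxLam F` above all
elements of `F` and above `auxLam G` for every proper subset `G ⊂ F`. -/
noncomputable def auxLam (F : Finset Λ) : Λ :=
  (Finset.exists_le (F ∪ (F.ssubsets.attach.image fun G => auxLam G.1))).choose
termination_by F.card
decreasing_by all_goals exact Finset.card_lt_card (Finset.mem_ssubsets.mp G.2)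

theorem auxLam_spec (F : Finset Λ) :
    ∀ x ∈ F ∪ (F.ssubsets.attach.image fun G => auxLam G.1), x ≤ auxLam F := by
  rw [auxLam]
  exact (Finset.exists_le _).choose_spec

theorem le_auxLam {x : Λ} {F : Finset Λ} (h : x ∈ F) : x ≤ auxLam F :=
  auxLam_spec F x (Finset.mem_union_left _ h)

theorem auxLam_le_of_ssubset {G F : Finset Λ} (h : G ⊂ F) : auxLam G ≤ auxLam F := by
  refine auxLam_spec F _ (Finset.mem_union_right _ ?_)
  exact Finset.mem_image.mpr ⟨⟨G, Finset.mem_ssubsets.mpr h⟩, Finset.mem_attach _ _, rfl⟩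

theorem auxLam_mono {G F : Finset Λ} (h : G ⊆ F) : auxLam G ≤ auxLam F := by
  rcases (lt_or_eq_of_le (α := Finset Λ) h) with h' | rfl
  · exact auxLam_le_of_ssubset h'
  · exact le_rfl

end Aux

/-- Corollary 1: every inverse system `X` in `C` is isomorphic in
`pro^J-C` to an inverse system `X'` indexed by a cofinite directed partially
ordered set. -/
theorem exists_cofinite_jIso {C : Type u} [Category.{v} C]
    (J : Type t) [PartialOrder J] [IsDirected J (· ≤ ·)] [Nonempty J]
    {Λ : Type w} [Preorder Λ] [IsDirected Λ (· ≤ ·)] [Nonempty Λ]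
    (X : InvSys C Λ) :
    ∃ (N : CofinitePoset.{w}) (X' : InvSys C N.carrier), JIso J X X' := by
  classical
  haveI : IsDirected (Finset Λ) (· ≤ ·) :=
    ⟨fun a b => ⟨a ∪ b, Finset.subset_union_left, Finset.subset_union_right⟩⟩
  let N : CofinitePoset.{w} :=
    { carrier := Finset Λ
      cofinite := fun n => Set.Finite.subset n.powerset.finite_toSet
        (fun m hm => Finset.mem_coe.mpr (Finset.mem_powerset.mpr hm.le)) }
  let X' : InvSys C N.carrier :=
    { obj := fun F => X.obj (auxLam F)
      bond := fun h => X.bond (auxLam_mono h)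
      bond_refl := fun F => X.bond_refl (auxLam F)
      bond_comp := fun h h' => X.bond_comp _ _ }
  let f : JMor J X X' :=
    { idx := auxLam
      app := fun F _ => 𝟙 (X.obj (auxLam F))
      cond := by
        intro G F h
        refine ⟨auxLam F, auxLam_mono h, le_rfl, Classical.arbitrary J, fun j' _ => ?_⟩
        show X.bond (auxLam_mono h) ≫ 𝟙 _ = X.bond le_rfl ≫ 𝟙 _ ≫ X.bond (auxLam_mono h)
        simp [X.bond_refl] }
  let g : JMor J X' X :=
    { idx := fun l => ({l} : Finset Λ)
      app := fun l _ => X.bond (le_auxLam (Finset.mem_singleton_self l))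
      cond := by
        intro l l' h
        have h1 : ({l} : Finset Λ) ⊆ {l, l'} :=
          Finset.singleton_subset_iff.mpr (Finset.mem_insert_self _ _)
        have h2 : ({l'} : Finset Λ) ⊆ {l, l'} :=
          Finset.singleton_subset_iff.mpr
            (Finset.mem_insert_of_mem (Finset.mem_singleton_self _))
        refine ⟨{l, l'}, h1, h2, Classical.arbitrary J, fun j' _ => ?_⟩
        show X.bond (auxLam_mono h1) ≫ X.bond (le_auxLam (Finset.mem_singleton_self l))
            = X.bond (auxLam_mono h2)
              ≫ X.bond (le_auxLam (Finset.mem_singleton_self l')) ≫ X.bond h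
        rw [X.bond_comp, ← Category.assoc, X.bond_comp, X.bond_comp] }
  refine ⟨N, X', ⟦f⟧, ⟦g⟧, ?_, ?_⟩
  · apply Quotient.sound
    intro l
    have h1 : l ≤ auxLam ({l} : Finset Λ) := le_auxLam (Finset.mem_singleton_self l)
    refine ⟨auxLam {l}, le_rfl, h1, Classical.arbitrary J, fun j' _ => ?_⟩
    show X.bond le_rfl ≫ 𝟙 _ ≫ X.bond h1 = X.bond h1 ≫ 𝟙 _
    simp [X.bond_refl]
  · apply Quotient.sound
    intro F
    have h1 : ({auxLam F} : Finset Λ) ⊆ insert (auxLam F) F :=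
      Finset.singleton_subset_iff.mpr (Finset.mem_insert_self _ _)
    have h2 : F ⊆ insert (auxLam F) F := Finset.subset_insert _ _
    refine ⟨insert (auxLam F) F, h1, h2, Classical.arbitrary J, fun j' _ => ?_⟩
    show X.bond (auxLam_mono h1)
          ≫ X.bond (le_auxLam (Finset.mem_singleton_self (auxLam F))) ≫ 𝟙 _
        = X.bond (auxLam_mono h2) ≫ 𝟙 _
    rw [Category.comp_id, Category.comp_id, X.bond_comp]
end

section
/- Let C be a category, J a directed partially ordered set, and f : X → Y a morphism of pro^J-C. Then there exist inverse systems X' and Y' in C having the same cofinite directed index set (N, ≤), a morphism f' : X' → Y' of pro^J-C having a level representative (1_N, f'_ν^j), and isomorphisms i : X → X' and j : Y → Y' of pro^J-C, such that j ∘ f = f' ∘ i in pro^J-C. -/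
open CategoryTheory

universe t w v u

variable {C : Type u} [Category.{v} C]

section ReindexAux
variable {α β : Type w} [Preorder α] [IsDirected α (· ≤ ·)] [Nonempty α]

/-- An upper bound of a finite set in a nonempty directed preorder. -/
noncomputable def ubnd (s : Finset α) : α := s.exists_le.choose

lemma le_ubnd {s : Finset α} {a : α} (h : a ∈ s) : a ≤ ubnd s :=
  s.exists_le.choose_spec a h

variable [DecidableEq α] [DecidableEq β]

/-- A monotone reindexing function dominating a given base function. -/
noncomputable def reidx (base : Finset β → Finset α) (F : Finset β) : α :=
  ubnd (base F ∪ (F.powerset.erase F).attach.image fun G => reidx base G.1)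
termination_by F.card
decreasing_by
  rename_i G
  have h := G.2
  rw [Finset.mem_erase, Finset.mem_powerset] at h
  exact Finset.card_lt_card (h.2.ssubset_of_ne h.1)

lemma le_reidx {base : Finset β → Finset α} {F : Finset β} {a : α} (h : a ∈ base F) :
    a ≤ reidx base F := by
  rw [reidx]; exact le_ubnd (Finset.mem_union_left _ h)

lemma reidx_mono {base : Finset β → Finset α} {G F : Finset β} (h : G ⊆ F) :
    reidx base G ≤ reidx base F := by
  rcases eq_or_ne G F with rfl | hne
  · exact le_refl _
  · conv_rhs => rw [reidx]
    refine le_ubnd (Finset.mem_union_right _ ?_)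
    refine Finset.mem_image.2 ⟨⟨G, ?_⟩, Finset.mem_attach _ _, rfl⟩
    rw [Finset.mem_erase, Finset.mem_powerset]; exact ⟨hne, h⟩

lemma bond_bond {C : Type u} [Category.{v} C] {Λ : Type w} [Preorder Λ]
    (X : InvSys C Λ) {a b c : Λ} (h : a ≤ b) (h' : b ≤ c) {Z : C}
    (g : X.obj a ⟶ Z) : X.bond h' ≫ X.bond h ≫ g = X.bond (h.trans h') ≫ g := by
  rw [← Category.assoc, X.bond_comp]

end ReindexAux

/-- Theorem 2, the reindexing theorem: for every morphism
`f : X → Y` of `pro^J-C` there exist inverse systems `X'`, `Y'` over the same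
cofinite directed index set `N`, a morphism `f' : X' → Y'` having a level
representative `(1_N, f'_ν^j)`, and isomorphisms `i : X → X'`, `j : Y → Y'` of
`pro^J-C` such that `j ∘ f = f' ∘ i` in `pro^J-C`. -/
theorem reindexing {C : Type u} [Category.{v} C]
    (J : Type t) [PartialOrder J] [IsDirected J (· ≤ ·)] [Nonempty J]
    {Λ M : Type w} [Preorder Λ] [IsDirected Λ (· ≤ ·)] [Nonempty Λ]
    [Preorder M] [IsDirected M (· ≤ ·)] [Nonempty M]
    (X : InvSys C Λ) (Y : InvSys C M) (f : JHom J X Y) :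
    ∃ (N : CofinitePoset.{w}) (X' Y' : InvSys C N.carrier)
      (f' : JMor J X' Y') (i : JHom J X X') (jm : JHom J Y Y'),
      f'.idx = _root_.id ∧ IsJIso J i ∧ IsJIso J jm ∧
        JHom.comp J f jm = JHom.comp J i (⟦f'⟧ : JHom J X' Y') := by
  classical
  obtain ⟨F0, rfl⟩ := Quotient.exists_rep f
  haveI : IsDirected (Finset (Λ ⊕ M)) (· ≤ ·) :=
    ⟨fun a b => ⟨a ∪ b, Finset.le_iff_subset.2 Finset.subset_union_left,
      Finset.le_iff_subset.2 Finset.subset_union_right⟩⟩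
  set s : Finset (Λ ⊕ M) → M :=
    reidx (fun F => F.image (Sum.elim (fun _ => Classical.arbitrary M) _root_.id)) with hs
  set u : Finset (Λ ⊕ M) → Λ :=
    reidx (fun F => insert (F0.idx (s F))
      (F.image (Sum.elim _root_.id (fun _ => Classical.arbitrary Λ)))) with hu
  have hs_mem : ∀ {μ : M} {F : Finset (Λ ⊕ M)}, Sum.inr μ ∈ F → μ ≤ s F := by
    intro μ F h
    exact le_reidx (Finset.mem_image.2 ⟨Sum.inr μ, h, rfl⟩)
  have hs_mono : ∀ {G F : Finset (Λ ⊕ M)}, G ≤ F → s G ≤ s F :=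
    fun h => reidx_mono (Finset.le_iff_subset.1 h)
  have hu_mem : ∀ {l : Λ} {F : Finset (Λ ⊕ M)}, Sum.inl l ∈ F → l ≤ u F := by
    intro l F h
    exact le_reidx (Finset.mem_insert_of_mem (Finset.mem_image.2 ⟨Sum.inl l, h, rfl⟩))
  have hu_mono : ∀ {G F : Finset (Λ ⊕ M)}, G ≤ F → u G ≤ u F :=
    fun h => reidx_mono (Finset.le_iff_subset.1 h)
  have hu_s : ∀ F : Finset (Λ ⊕ M), F0.idx (s F) ≤ u F := fun F =>
    le_reidx (Finset.mem_insert_self _ _)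
  let N : CofinitePoset.{w} :=
    { carrier := Finset (Λ ⊕ M)
      cofinite := fun F => Set.Finite.subset F.powerset.finite_toSet
        (fun G hG => Finset.mem_coe.2 (Finset.mem_powerset.2
          (Finset.le_iff_subset.1 (le_of_lt hG)))) }
  let Xp : InvSys C N.carrier :=
    { obj := fun F => X.obj (u F)
      bond := fun {F F'} h => X.bond (hu_mono h)
      bond_refl := fun F => X.bond_refl (u F)
      bond_comp := fun h h' => X.bond_comp _ _ }
  let Yp : InvSys C N.carrier :=
    { obj := fun F => Y.obj (s F)
      bond := fun {F F'} h => Y.bond (hs_mono h)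
      bond_refl := fun F => Y.bond_refl (s F)
      bond_comp := fun h h' => Y.bond_comp _ _ }
  let fp : JMor J Xp Yp :=
    { idx := _root_.id
      app := fun F j => X.bond (hu_s F) ≫ F0.app (s F) j
      cond := by
        intro F F' h
        obtain ⟨l, hl, hl', j0, e⟩ := F0.cond (hs_mono h)
        have hmem : Sum.inl l ∈ insert (Sum.inl l) F' := Finset.mem_insert_self _ _
        have hL : F ≤ insert (Sum.inl l) F' :=
          Finset.le_iff_subset.2 ((Finset.le_iff_subset.1 h).trans (Finset.subset_insert _ _))
        have hL' : F' ≤ insert (Sum.inl l) F' :=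
          Finset.le_iff_subset.2 (Finset.subset_insert _ _)
        refine ⟨insert (Sum.inl l) F', hL, hL', j0, fun j' hj' => ?_⟩
        show X.bond (hu_mono hL) ≫ X.bond (hu_s F) ≫ F0.app (s F) j'
            = X.bond (hu_mono hL') ≫ (X.bond (hu_s F') ≫ F0.app (s F') j')
              ≫ Y.bond (hs_mono h)
        calc X.bond (hu_mono hL) ≫ X.bond (hu_s F) ≫ F0.app (s F) j'
            = X.bond (hl.trans (hu_mem hmem)) ≫ F0.app (s F) j' :=
              bond_bond X _ _ _
          _ = X.bond (hu_mem hmem) ≫ X.bond hl ≫ F0.app (s F) j' :=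
              (bond_bond X hl (hu_mem hmem) _).symm
          _ = X.bond (hu_mem hmem) ≫ X.bond hl' ≫ F0.app (s F') j'
                ≫ Y.bond (hs_mono h) := by rw [e j' hj']
          _ = X.bond (hl'.trans (hu_mem hmem)) ≫ F0.app (s F') j'
                ≫ Y.bond (hs_mono h) := bond_bond X _ _ _
          _ = X.bond (hu_mono hL') ≫ X.bond (hu_s F') ≫ F0.app (s F') j'
                ≫ Y.bond (hs_mono h) := (bond_bond X _ _ _).symm
          _ = X.bond (hu_mono hL') ≫ (X.bond (hu_s F') ≫ F0.app (s F') j')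
                ≫ Y.bond (hs_mono h) := by simp only [Category.assoc] }
  let iM : JMor J X Xp :=
    { idx := u
      app := fun F _ => 𝟙 (X.obj (u F))
      cond := by
        intro F F' h
        refine ⟨u F', hu_mono h, le_refl _, Classical.arbitrary J, fun j' _ => ?_⟩
        show X.bond (hu_mono h) ≫ 𝟙 _ = X.bond (le_refl _) ≫ 𝟙 _ ≫ X.bond (hu_mono h)
        simp [X.bond_refl] }
  let iInv : JMor J Xp X :=
    { idx := fun l => {Sum.inl l}
      app := fun l _ => X.bond (hu_mem (Finset.mem_singleton_self _))
      cond := by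
        intro l l' h
        have h1 : ({Sum.inl l} : Finset (Λ ⊕ M)) ≤ {Sum.inl l, Sum.inl l'} :=
          Finset.le_iff_subset.2 (Finset.singleton_subset_iff.2 (by simp))
        have h2 : ({Sum.inl l'} : Finset (Λ ⊕ M)) ≤ {Sum.inl l, Sum.inl l'} :=
          Finset.le_iff_subset.2 (Finset.singleton_subset_iff.2 (by simp))
        refine ⟨{Sum.inl l, Sum.inl l'}, h1, h2, Classical.arbitrary J, fun j' _ => ?_⟩
        show X.bond (hu_mono h1) ≫ X.bond (hu_mem (Finset.mem_singleton_self _))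
            = X.bond (hu_mono h2) ≫ X.bond (hu_mem (Finset.mem_singleton_self _)) ≫ X.bond h
        rw [X.bond_comp, bond_bond, X.bond_comp] }
  let jM : JMor J Y Yp :=
    { idx := s
      app := fun F _ => 𝟙 (Y.obj (s F))
      cond := by
        intro F F' h
        refine ⟨s F', hs_mono h, le_refl _, Classical.arbitrary J, fun j' _ => ?_⟩
        show Y.bond (hs_mono h) ≫ 𝟙 _ = Y.bond (le_refl _) ≫ 𝟙 _ ≫ Y.bond (hs_mono h)
        simp [Y.bond_refl] }
  let jInv : JMor J Yp Y :=
    { idx := fun m => {Sum.inr m}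
      app := fun m _ => Y.bond (hs_mem (Finset.mem_singleton_self _))
      cond := by
        intro m m' h
        have h1 : ({Sum.inr m} : Finset (Λ ⊕ M)) ≤ {Sum.inr m, Sum.inr m'} :=
          Finset.le_iff_subset.2 (Finset.singleton_subset_iff.2 (by simp))
        have h2 : ({Sum.inr m'} : Finset (Λ ⊕ M)) ≤ {Sum.inr m, Sum.inr m'} :=
          Finset.le_iff_subset.2 (Finset.singleton_subset_iff.2 (by simp))
        refine ⟨{Sum.inr m, Sum.inr m'}, h1, h2, Classical.arbitrary J, fun j' _ => ?_⟩
        show Y.bond (hs_mono h1) ≫ Y.bond (hs_mem (Finset.mem_singleton_self _))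
            = Y.bond (hs_mono h2) ≫ Y.bond (hs_mem (Finset.mem_singleton_self _)) ≫ Y.bond h
        rw [Y.bond_comp, bond_bond, Y.bond_comp] }
  refine ⟨N, Xp, Yp, fp, ⟦iM⟧, ⟦jM⟧, rfl, ⟨⟦iInv⟧, ?_, ?_⟩, ⟨⟦jInv⟧, ?_, ?_⟩, ?_⟩
  · -- iM ≫ iInv ∼ id X
    refine Quotient.sound (fun l => ?_)
    refine ⟨u {Sum.inl l}, le_refl _, hu_mem (Finset.mem_singleton_self _),
      Classical.arbitrary J, fun j' _ => ?_⟩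
    show X.bond (le_refl _) ≫ 𝟙 _ ≫ X.bond (hu_mem (Finset.mem_singleton_self _))
        = X.bond (hu_mem (Finset.mem_singleton_self _)) ≫ 𝟙 _
    simp [X.bond_refl]
  · -- iInv ≫ iM ∼ id Xp
    refine Quotient.sound (fun F => ?_)
    have hL : ({Sum.inl (u F)} : Finset (Λ ⊕ M)) ≤ insert (Sum.inl (u F)) F :=
      Finset.le_iff_subset.2 (Finset.singleton_subset_iff.2 (Finset.mem_insert_self _ _))
    have hL' : F ≤ insert (Sum.inl (u F)) F :=
      Finset.le_iff_subset.2 (Finset.subset_insert _ _)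
    refine ⟨insert (Sum.inl (u F)) F, hL, hL', Classical.arbitrary J, fun j' _ => ?_⟩
    show X.bond (hu_mono hL) ≫ X.bond (hu_mem (Finset.mem_singleton_self _)) ≫ 𝟙 _
        = X.bond (hu_mono hL') ≫ 𝟙 _
    simp only [Category.comp_id]
    rw [X.bond_comp]
  · -- jM ≫ jInv ∼ id Y
    refine Quotient.sound (fun m => ?_)
    refine ⟨s {Sum.inr m}, le_refl _, hs_mem (Finset.mem_singleton_self _),
      Classical.arbitrary J, fun j' _ => ?_⟩
    show Y.bond (le_refl _) ≫ 𝟙 _ ≫ Y.bond (hs_mem (Finset.mem_singleton_self _))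
        = Y.bond (hs_mem (Finset.mem_singleton_self _)) ≫ 𝟙 _
    simp [Y.bond_refl]
  · -- jInv ≫ jM ∼ id Yp
    refine Quotient.sound (fun F => ?_)
    have hL : ({Sum.inr (s F)} : Finset (Λ ⊕ M)) ≤ insert (Sum.inr (s F)) F :=
      Finset.le_iff_subset.2 (Finset.singleton_subset_iff.2 (Finset.mem_insert_self _ _))
    have hL' : F ≤ insert (Sum.inr (s F)) F :=
      Finset.le_iff_subset.2 (Finset.subset_insert _ _)
    refine ⟨insert (Sum.inr (s F)) F, hL, hL', Classical.arbitrary J, fun j' _ => ?_⟩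
    show Y.bond (hs_mono hL) ≫ Y.bond (hs_mem (Finset.mem_singleton_self _)) ≫ 𝟙 _
        = Y.bond (hs_mono hL') ≫ 𝟙 _
    simp only [Category.comp_id]
    rw [Y.bond_comp]
  · -- the square commutes
    refine Quotient.sound (fun F => ?_)
    refine ⟨u F, hu_s F, le_refl _, Classical.arbitrary J, fun j' _ => ?_⟩
    show X.bond (hu_s F) ≫ F0.app (s F) j' ≫ 𝟙 _
        = X.bond (le_refl _) ≫ 𝟙 _ ≫ X.bond (hu_s F) ≫ F0.app (s F) j'
    simp [X.bond_refl]
end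

section
/- Let C be a category and J a directed partially ordered set having a maximum element max J. Then the category pro^J-C is isomorphic to the ordinary pro-category pro-C; indeed, every morphism f = [(f, f_μ^j)] : X → Y of pro^J-C is fully and uniquely determined by the pro-C morphism represented by (f, f_μ^{max J}) : X → Y, and this assignment is bijective on each hom-set and compatible with composition. -/
open CategoryTheory

universe t w v u

variable {C : Type u} [Category.{v} C]

/-- Restriction of a `J`-morphism to the morphism of inverse systems (a
pro-morphism, modelled as a `PUnit`-morphism) given by its component at `max J`. -/
def resMor {J : Type t} [Preorder J] (jmax : J) (hmax : ∀ j : J, j ≤ jmax)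
    {Λ M : Type w} [Preorder Λ] [Preorder M]
    {X : InvSys C Λ} {Y : InvSys C M} (f : JMor J X Y) : JMor PUnit.{w + 1} X Y where
  idx := f.idx
  app := fun μ _ => f.app μ jmax
  cond := by
    intro μ μ' h
    obtain ⟨l, hl, hl', j, e⟩ := f.cond h
    exact ⟨l, hl, hl', PUnit.unit, fun _ _ => e jmax (hmax j)⟩

/-- Theorem 3 (iii): if `J` has a maximum element, then `pro^J-C` is
isomorphic to `pro-C` (the latter modelled as `pro^{PUnit}-C`), keeping objects
fixed: every morphism `[(f, f_μ^j)]` of `pro^J-C` is fully and uniquely determined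
by the pro-morphism `(f, f_μ^{max J})`, the assignment is bijective on each hom-set
(first two clauses) and compatible with identities and composition (last two). -/
theorem proJ_iso_pro_of_max {C : Type u} [Category.{v} C]
    {J : Type t} [PartialOrder J] [IsDirected J (· ≤ ·)] [Nonempty J]
    (jmax : J) (hmax : ∀ j : J, j ≤ jmax)
    {Λ M N : Type w} [Preorder Λ] [IsDirected Λ (· ≤ ·)] [Nonempty Λ]
    [Preorder M] [IsDirected M (· ≤ ·)] [Nonempty M]
    [Preorder N] [IsDirected N (· ≤ ·)] [Nonempty N]
    (X : InvSys C Λ) (Y : InvSys C M) (Z : InvSys C N) :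
    (∀ f f' : JMor J X Y,
      JMorEquiv J X Y f f' ↔
        JMorEquiv PUnit.{w + 1} X Y (resMor jmax hmax f) (resMor jmax hmax f')) ∧
    (∀ g : JMor PUnit.{w + 1} X Y, ∃ f : JMor J X Y,
      JMorEquiv PUnit.{w + 1} X Y (resMor jmax hmax f) g) ∧
    (resMor jmax hmax (JMor.id J X) = JMor.id PUnit.{w + 1} X) ∧
    (∀ (f : JMor J X Y) (g : JMor J Y Z),
      resMor jmax hmax (JMor.comp J f g) =
        JMor.comp PUnit.{w + 1} (resMor jmax hmax f) (resMor jmax hmax g)) := by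

  refine ⟨?_, ?_, rfl, fun f g => rfl⟩
  · intro f f'
    constructor
    · intro h μ
      obtain ⟨l, hl, hl', j, e⟩ := h μ
      exact ⟨l, hl, hl', PUnit.unit, fun _ _ => e jmax (hmax j)⟩
    · intro h μ
      obtain ⟨l, hl, hl', _, e⟩ := h μ
      refine ⟨l, hl, hl', jmax, fun j' hj' => ?_⟩
      have : j' = jmax := le_antisymm (hmax j') hj'
      subst this
      exact e PUnit.unit (le_of_eq rfl)
  · intro g
    refine ⟨⟨g.idx, fun μ _ => g.app μ PUnit.unit, ?_⟩, ?_⟩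
    · intro μ μ' h
      obtain ⟨l, hl, hl', _, e⟩ := g.cond h
      exact ⟨l, hl, hl', jmax, fun j' _ => e PUnit.unit (le_of_eq rfl)⟩
    · intro μ
      exact ⟨g.idx μ, le_refl _, le_refl _, PUnit.unit, fun _ _ => rfl⟩
end

section
/- Let C be a category and J a directed partially ordered set having a maximum element. Then, for every directed partially ordered set L, there exists a canonical faithful 'inclusion' functor I : pro^J-C → pro^L-C keeping the objects fixed, which sends the class of (f, f_μ^j) to the class of the commutative L-morphism (f, f'_μ^l) with f'_μ^l = f_μ^{max J} for all l ∈ L. -/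
open CategoryTheory

universe t w v u

variable {C : Type u} [Category.{v} C]

/-- The map on `J`-morphisms underlying the canonical inclusion functor
`pro^J-C → pro^L-C` (for `J` with maximum `jmax`): the `L`-family is constant,
given by the component of the `J`-morphism at `max J`. -/
def trMaxMor {J : Type t} [Preorder J] (jmax : J) (hmax : ∀ j : J, j ≤ jmax)
    (L : Type t') [Preorder L] [Nonempty L]
    {Λ M : Type w} [Preorder Λ] [Preorder M]
    {X : InvSys C Λ} {Y : InvSys C M} (f : JMor J X Y) : JMor L X Y where
  idx := f.idx
  app := fun μ _ => f.app μ jmax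
  cond := by
    intro μ μ' h
    obtain ⟨l, hl, hl', j, e⟩ := f.cond h
    exact ⟨l, hl, hl', Classical.arbitrary L, fun _ _ => e jmax (hmax j)⟩

/-- Theorem 3 (v): if `J` has a maximum element then, for every
directed partially ordered set `L`, there is a canonical inclusion functor
`pro^J-C → pro^L-C` keeping objects fixed, sending the class of `(f, f_μ^j)` to the
class of the commutative `L`-morphism `(f, f'_μ^l)` with `f'_μ^l = f_μ^{max J}`:
it is well defined and faithful (first clause), takes commutative values (second),
and preserves identities and composition (last two). -/
theorem inclusion_functor_of_max {C : Type u} [Category.{v} C]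
    {J : Type t} [PartialOrder J] [IsDirected J (· ≤ ·)] [Nonempty J]
    (jmax : J) (hmax : ∀ j : J, j ≤ jmax)
    (L : Type t') [PartialOrder L] [IsDirected L (· ≤ ·)] [Nonempty L]
    {Λ M N : Type w} [Preorder Λ] [IsDirected Λ (· ≤ ·)] [Nonempty Λ]
    [Preorder M] [IsDirected M (· ≤ ·)] [Nonempty M]
    [Preorder N] [IsDirected N (· ≤ ·)] [Nonempty N]
    (X : InvSys C Λ) (Y : InvSys C M) (Z : InvSys C N) :
    (∀ f f' : JMor J X Y,
      JMorEquiv J X Y f f' ↔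
        JMorEquiv L X Y (trMaxMor jmax hmax L f) (trMaxMor jmax hmax L f')) ∧
    (∀ f : JMor J X Y,
      IsCommJMor L X Y (trMaxMor jmax hmax L f).idx (trMaxMor jmax hmax L f).app) ∧
    (trMaxMor jmax hmax L (JMor.id J X) = JMor.id L X) ∧
    (∀ (f : JMor J X Y) (g : JMor J Y Z),
      trMaxMor jmax hmax L (JMor.comp J f g) =
        JMor.comp L (trMaxMor jmax hmax L f) (trMaxMor jmax hmax L g)) := by
  refine ⟨?_, ?_, rfl, fun f g => rfl⟩
  · intro f f'
    constructor
    · intro h μ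
      obtain ⟨l, hl, hl', j, e⟩ := h μ
      exact ⟨l, hl, hl', Classical.arbitrary L, fun _ _ => e jmax (hmax j)⟩
    · intro h μ
      obtain ⟨l, hl, hl', l₀, e⟩ := h μ
      refine ⟨l, hl, hl', jmax, fun j' hj' => ?_⟩
      have : j' = jmax := le_antisymm (hmax j') hj'
      subst this
      exact e l₀ (le_refl l₀)
  · intro f μ μ' h
    obtain ⟨l, hl, hl', j, e⟩ := f.cond h
    exact ⟨l, hl, hl', fun _ => e jmax (hmax j)⟩
end

section
/- Let C be a category, D ⊆ C a full pro-reflective subcategory, and J a directed partially ordered set having a maximum element. Then the J-shape category Sh^J_{(C,D)} is isomorphic to the abstract shape category Sh_{(C,D)}, by a functor keeping objects fixed. -/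
open CategoryTheory

universe t w v u

variable {C : Type u} [Category.{v} C]

/-- The rudimentary inverse system associated with an object `X` of `C`. -/
def rud (X : C) : InvSys C PUnit.{w + 1} where
  obj _ := X
  bond _ := 𝟙 X
  bond_refl _ := rfl
  bond_comp _ _ := Category.id_comp _

/-- The `J`-morphism of rudimentary systems induced by a `C`-morphism `u`. -/
def constMor (J : Type t) [Preorder J] [Nonempty J] {A B : C} (u : A ⟶ B) :
    JMor J (rud A) (rud B) where
  idx := _root_.id
  app := fun _ _ => u
  cond := by
    intro μ μ' h
    exact ⟨μ', le_refl _, le_refl _, Classical.arbitrary J, fun j _ => by simp [rud]⟩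

/-- The projection `J`-morphism `X → (X_l)` of `pro^J-C`. -/
def projMor (J : Type t) [Preorder J] [Nonempty J] {Λ : Type w} [Preorder Λ]
    (X : InvSys C Λ) (l : Λ) : JMor J X (rud (X.obj l)) where
  idx := fun _ => l
  app := fun _ _ => 𝟙 (X.obj l)
  cond := by
    intro μ μ' h
    exact ⟨l, le_refl _, le_refl _, Classical.arbitrary J, fun j _ => by simp [rud]⟩

/-- The `J`-morphism `X → (Q)` determined by a family `fs : J → (X_l ⟶ Q)`
with the constant index function at `l`. -/
def inducedMor (J : Type t) [Preorder J] [Nonempty J] {Λ : Type w} [Preorder Λ]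
    (Xs : InvSys C Λ) {Q : C} (l : Λ) (fs : J → (Xs.obj l ⟶ Q)) :
    JMor J Xs (rud Q) where
  idx := fun _ => l
  app := fun _ j => fs j
  cond := by
    intro μ μ' h
    exact ⟨l, le_refl _, le_refl _, Classical.arbitrary J, fun j _ => by simp [rud]⟩

/-- The inclusion of pro-morphisms (`J = {1}`, modelled by `PUnit`) into `J`-morphisms,
given by the constant family. -/
def indJMor (J : Type t) [Preorder J] [Nonempty J] {Λ M : Type w} [Preorder Λ] [Preorder M]
    {X : InvSys C Λ} {Y : InvSys C M} (f : JMor PUnit.{w + 1} X Y) : JMor J X Y where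
  idx := f.idx
  app := fun μ _ => f.app μ PUnit.unit
  cond := by
    intro μ μ' h
    obtain ⟨l, hl, hl', j, e⟩ := f.cond h
    exact ⟨l, hl, hl', Classical.arbitrary J, fun j' _ => e PUnit.unit (le_refl _)⟩

/-- The inclusion functor `pro-C → pro^J-C` on hom-sets. -/
def indJHom (J : Type t) [Preorder J] [IsDirected J (· ≤ ·)] [Nonempty J]
    {Λ M : Type w} [Preorder Λ] [IsDirected Λ (· ≤ ·)] [Preorder M]
    {X : InvSys C Λ} {Y : InvSys C M} (f : JHom PUnit.{w + 1} X Y) : JHom J X Y :=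
  Quotient.lift (fun f => (⟦indJMor J f⟧ : JHom J X Y))
    (fun f g hfg => Quotient.sound (fun μ => by
      obtain ⟨l, hl, hl', j, e⟩ := hfg μ
      exact ⟨l, hl, hl', Classical.arbitrary J, fun j' _ => e PUnit.unit (le_refl _)⟩)) f

/-- A `D`-expansion of an object `X` of `C` (for a full subcategory given by the
object class `D`): a pro-morphism `mor : (X) → sys` into an inverse system lying in `D`,
universal among pro-morphisms from `(X)` to inverse systems in `D`. -/
structure Expansion (D : Set C) (X : C) where
  Idx : Type w
  [pre : Preorder Idx]
  [dir : IsDirected Idx (· ≤ ·)]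
  [ne : Nonempty Idx]
  sys : InvSys C Idx
  inD : ∀ l, sys.obj l ∈ D
  mor : JHom PUnit.{w + 1} (rud X) sys
  universal : ∀ {M : Type w} [Preorder M] [IsDirected M (· ≤ ·)] [Nonempty M]
    (Y : InvSys C M), (∀ m, Y.obj m ∈ D) →
    ∀ h : JHom PUnit.{w + 1} (rud X) Y,
      ∃! g : JHom PUnit.{w + 1} sys Y, JHom.comp PUnit.{w + 1} mor g = h

attribute [instance] Expansion.pre Expansion.dir Expansion.ne

/-- The induced map `pro^J-C(X, Y) → pro-C(X, Y)` on hom-sets. -/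
def resHom {J : Type t} [Preorder J] [IsDirected J (· ≤ ·)] [Nonempty J]
    (jmax : J) (hmax : ∀ j : J, j ≤ jmax)
    {Λ M : Type w} [Preorder Λ] [IsDirected Λ (· ≤ ·)] [Preorder M]
    {X : InvSys C Λ} {Y : InvSys C M} (f : JHom J X Y) : JHom PUnit.{w + 1} X Y :=
  Quotient.lift (fun f => (⟦resMor jmax hmax f⟧ : JHom PUnit.{w + 1} X Y))
    (fun f g hfg => Quotient.sound (fun μ => by
      obtain ⟨l, hl, hl', j, e⟩ := hfg μ
      exact ⟨l, hl, hl', PUnit.unit, fun _ _ => e jmax (hmax j)⟩)) f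

/-- Key lemma: any `J`-morphism is equivalent to the constant extension of its
restriction at the maximum element, since `j' ≥ jmax` forces `j' = jmax`. -/
theorem jmorEquiv_indJMor_resMor {J : Type t} [PartialOrder J] [IsDirected J (· ≤ ·)]
    [Nonempty J] (jmax : J) (hmax : ∀ j : J, j ≤ jmax)
    {Λ M : Type w} [Preorder Λ] [Preorder M]
    {X : InvSys C Λ} {Y : InvSys C M} (f : JMor J X Y) :
    JMorEquiv J X Y (indJMor J (resMor jmax hmax f)) f := by
  intro μ
  refine ⟨f.idx μ, le_refl _, le_refl _, jmax, fun j' hj' => ?_⟩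
  have : j' = jmax := le_antisymm (hmax j') hj'
  subst this
  rfl

theorem indJHom_resHom {J : Type t} [PartialOrder J] [IsDirected J (· ≤ ·)]
    [Nonempty J] (jmax : J) (hmax : ∀ j : J, j ≤ jmax)
    {Λ M : Type w} [Preorder Λ] [IsDirected Λ (· ≤ ·)] [Preorder M]
    {X : InvSys C Λ} {Y : InvSys C M} (f : JHom J X Y) :
    indJHom J (resHom jmax hmax f) = f := by
  induction f using Quotient.inductionOn with
  | h f => exact Quotient.sound (jmorEquiv_indJMor_resMor jmax hmax f)

theorem resHom_indJHom {J : Type t} [PartialOrder J] [IsDirected J (· ≤ ·)]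
    [Nonempty J] (jmax : J) (hmax : ∀ j : J, j ≤ jmax)
    {Λ M : Type w} [Preorder Λ] [IsDirected Λ (· ≤ ·)] [Preorder M]
    {X : InvSys C Λ} {Y : InvSys C M} (f : JHom PUnit.{w + 1} X Y) :
    resHom jmax hmax (indJHom J f) = f := by
  induction f using Quotient.inductionOn with
  | h f =>
    refine Quotient.sound (fun μ => ?_)
    exact ⟨f.idx μ, le_refl _, le_refl _, PUnit.unit, fun _ _ => rfl⟩

/-- STATEMENT 11 (Corollary 2 (iii)): if `D ⊆ C` is a (full) pro-reflective
subcategory (witnessed by a choice `E` of `D`-expansions) and `J` is a directed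
partially ordered set with a maximum element, then the `J`-shape category
`Sh^J_{(C,D)}` is isomorphic to the abstract shape category `Sh_{(C,D)}` by a
functor keeping the objects (= the objects of `C`) fixed: on each hom-set
(realized as `pro^J-D`, resp. `pro-D`, morphisms between the chosen expansions)
the restriction map is bijective, and it preserves identities and composition. -/
theorem shJ_iso_sh_of_max {C : Type u} [Category.{v} C]
    (D : Set C) (E : ∀ Z : C, Expansion.{w} D Z)
    {J : Type t} [PartialOrder J] [IsDirected J (· ≤ ·)] [Nonempty J]
    (jmax : J) (hmax : ∀ j : J, j ≤ jmax) :
    (∀ X Y : C, Function.Bijective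
      (fun f : JHom J (E X).sys (E Y).sys => resHom jmax hmax f)) ∧
    (∀ X : C, resHom jmax hmax (JHom.id J (E X).sys) = JHom.id PUnit.{w + 1} (E X).sys) ∧
    (∀ (X Y Z : C) (f : JHom J (E X).sys (E Y).sys) (g : JHom J (E Y).sys (E Z).sys),
      resHom jmax hmax (JHom.comp J f g) =
        JHom.comp PUnit.{w + 1} (resHom jmax hmax f) (resHom jmax hmax g)) := by
  refine ⟨fun X Y => ⟨fun f g h => ?_, fun h => ⟨indJHom J h, resHom_indJHom jmax hmax h⟩⟩,
    fun X => ?_, fun X Y Z f g => ?_⟩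
  · rw [← indJHom_resHom jmax hmax f, ← indJHom_resHom jmax hmax g]
    exact congrArg (indJHom J) h
  · refine Quotient.sound (fun μ => ?_)
    exact ⟨μ, le_refl _, le_refl _, PUnit.unit, fun _ _ => rfl⟩
  · induction f using Quotient.inductionOn with
    | h f =>
      induction g using Quotient.inductionOn with
      | h g =>
        refine Quotient.sound (fun ν => ?_)
        exact ⟨f.idx (g.idx ν), le_refl _, le_refl _, PUnit.unit, fun _ _ => rfl⟩
end

section
/- Let D be a full pro-reflective subcategory of a category C and let J be a directed partially ordered set. Then, for every pair of objects P, Q of D, the following statements are equivalent: (i) P and Q are isomorphic objects of D (equivalently of C); (ii) P ≅ Q in the shape category Sh_{(C,D)}; (iii) P ≅ Q in the J-shape category Sh^J_{(C,D)}. -/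
open CategoryTheory

universe t w v u

variable {C : Type u} [Category.{v} C]

/-! For `P ∈ D` the rudimentary system `(P)` already lies in `D`, so the universal property of a
`D`-expansion `(P) → 𝐏` yields a left inverse `𝐏 → (P)`, and uniqueness in the universal property
makes it a two-sided inverse. Hence `(P) ≅ 𝐏` in `pro-D`, and therefore in `pro^J-D` through the
inclusion `pro-D → pro^J-D`. So `𝐏 ≅ 𝐐` in `pro^J-D` exactly when `(P) ≅ (Q)` there, and a
`J`-isomorphism of rudimentary systems is, at any large enough `j`, an isomorphism `P ≅ Q`. -/

section ProJ

variable (J : Type t) [Preorder J] [IsDirected J (· ≤ ·)] [Nonempty J]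

theorem JHom.comp_assoc
    {Λ M N O : Type w} [Preorder Λ] [IsDirected Λ (· ≤ ·)]
    [Preorder M] [IsDirected M (· ≤ ·)] [Preorder N] [IsDirected N (· ≤ ·)] [Preorder O]
    {X : InvSys C Λ} {Y : InvSys C M} {Z : InvSys C N} {W : InvSys C O}
    (f : JHom J X Y) (g : JHom J Y Z) (h : JHom J Z W) :
    JHom.comp J (JHom.comp J f g) h = JHom.comp J f (JHom.comp J g h) := by
  induction f using Quotient.inductionOn
  induction g using Quotient.inductionOn
  induction h using Quotient.inductionOn
  exact Quotient.sound fun _ => ⟨_, le_rfl, le_rfl, Classical.arbitrary J, fun _ _ => by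
    simp [JMor.comp]⟩

theorem JHom.comp_id
    {Λ M : Type w} [Preorder Λ] [IsDirected Λ (· ≤ ·)] [Preorder M] [IsDirected M (· ≤ ·)]
    {X : InvSys C Λ} {Y : InvSys C M} (f : JHom J X Y) :
    JHom.comp J f (JHom.id J Y) = f := by
  induction f using Quotient.inductionOn
  exact Quotient.sound fun _ => ⟨_, le_rfl, le_rfl, Classical.arbitrary J, fun _ _ => by
    simp [JMor.comp, JMor.id]⟩

theorem JHom.id_comp
    {Λ M : Type w} [Preorder Λ] [IsDirected Λ (· ≤ ·)] [Preorder M] [IsDirected M (· ≤ ·)]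
    {X : InvSys C Λ} {Y : InvSys C M} (f : JHom J X Y) :
    JHom.comp J (JHom.id J X) f = f := by
  induction f using Quotient.inductionOn
  exact Quotient.sound fun _ => ⟨_, le_rfl, le_rfl, Classical.arbitrary J, fun _ _ => by
    simp [JMor.comp, JMor.id]⟩

variable {J}

theorem JIso.symm
    {Λ M : Type w} [Preorder Λ] [IsDirected Λ (· ≤ ·)] [Preorder M] [IsDirected M (· ≤ ·)]
    {X : InvSys C Λ} {Y : InvSys C M} (h : JIso J X Y) : JIso J Y X :=
  let ⟨f, g, hfg, hgf⟩ := h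
  ⟨g, f, hgf, hfg⟩

theorem JIso.trans
    {Λ M N : Type w} [Preorder Λ] [IsDirected Λ (· ≤ ·)]
    [Preorder M] [IsDirected M (· ≤ ·)] [Preorder N] [IsDirected N (· ≤ ·)]
    {X : InvSys C Λ} {Y : InvSys C M} {Z : InvSys C N}
    (h : JIso J X Y) (h' : JIso J Y Z) : JIso J X Z := by
  obtain ⟨f, f', hff', hf'f⟩ := h
  obtain ⟨g, g', hgg', hg'g⟩ := h'
  refine ⟨JHom.comp J f g, JHom.comp J g' f', ?_, ?_⟩
  · rw [JHom.comp_assoc, ← JHom.comp_assoc J g, hgg', JHom.id_comp, hff']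
  · rw [JHom.comp_assoc, ← JHom.comp_assoc J f', hf'f, JHom.id_comp, hg'g]

variable (J)

theorem indJHom_comp
    {Λ M N : Type w} [Preorder Λ] [IsDirected Λ (· ≤ ·)]
    [Preorder M] [IsDirected M (· ≤ ·)] [Preorder N]
    {X : InvSys C Λ} {Y : InvSys C M} {Z : InvSys C N}
    (f : JHom PUnit.{w + 1} X Y) (g : JHom PUnit.{w + 1} Y Z) :
    indJHom J (JHom.comp PUnit.{w + 1} f g) = JHom.comp J (indJHom J f) (indJHom J g) := by
  induction f using Quotient.inductionOn
  induction g using Quotient.inductionOn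
  rfl

theorem indJHom_id {Λ : Type w} [Preorder Λ] [IsDirected Λ (· ≤ ·)] (X : InvSys C Λ) :
    indJHom J (JHom.id PUnit.{w + 1} X) = JHom.id J X :=
  rfl

theorem isJIso_indJHom
    {Λ M : Type w} [Preorder Λ] [IsDirected Λ (· ≤ ·)] [Preorder M] [IsDirected M (· ≤ ·)]
    {X : InvSys C Λ} {Y : InvSys C M} (f : JHom PUnit.{w + 1} X Y)
    (hf : IsJIso PUnit.{w + 1} f) : IsJIso J (indJHom J f) :=
  let ⟨g, hfg, hgf⟩ := hf
  ⟨indJHom J g, by rw [← indJHom_comp, hfg, indJHom_id],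
    by rw [← indJHom_comp, hgf, indJHom_id]⟩

def constHom {A B : C} (u : A ⟶ B) : JHom J (rud.{w} A) (rud B) :=
  ⟦constMor J u⟧

theorem constHom_comp {A B B' : C} (u : A ⟶ B) (v : B ⟶ B') :
    JHom.comp J (constHom.{t, w} J u) (constHom J v) = constHom J (u ≫ v) :=
  rfl

theorem constHom_id (A : C) : constHom.{t, w} J (𝟙 A) = JHom.id J (rud.{w} A) :=
  rfl

theorem jIso_rud_of_iso {P Q : C} (e : P ≅ Q) : JIso J (rud.{w} P) (rud Q) :=
  ⟨constHom J e.hom, constHom J e.inv,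
    by rw [constHom_comp, e.hom_inv_id, constHom_id],
    by rw [constHom_comp, e.inv_hom_id, constHom_id]⟩

theorem nonempty_iso_of_jIso_rud {P Q : C} (h : JIso J (rud.{w} P) (rud Q)) :
    Nonempty (P ≅ Q) := by
  obtain ⟨F, G, hFG, hGF⟩ := h
  obtain ⟨f, rfl⟩ := Quotient.exists_rep F
  obtain ⟨g, rfl⟩ := Quotient.exists_rep G
  obtain ⟨_, _, _, j₁, hfg⟩ := Quotient.exact hFG PUnit.unit
  obtain ⟨_, _, _, j₂, hgf⟩ := Quotient.exact hGF PUnit.unit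
  obtain ⟨j, hj₁, hj₂⟩ := directed_of (· ≤ ·) j₁ j₂
  have hom_inv_id := hfg j hj₁
  have inv_hom_id := hgf j hj₂
  simp only [JMor.comp, JMor.id, rud, Category.id_comp] at hom_inv_id inv_hom_id
  exact ⟨⟨f.app PUnit.unit j, g.app PUnit.unit j, hom_inv_id, inv_hom_id⟩⟩

end ProJ

namespace Expansion

variable {D : Set C} {X : C}

theorem hom_ext (p : Expansion.{w} D X)
    {M : Type w} [Preorder M] [IsDirected M (· ≤ ·)] [Nonempty M]
    {Y : InvSys C M} (hY : ∀ m, Y.obj m ∈ D) {a b : JHom PUnit.{w + 1} p.sys Y}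
    (h : JHom.comp PUnit.{w + 1} p.mor a = JHom.comp PUnit.{w + 1} p.mor b) : a = b :=
  (p.universal Y hY _).unique h rfl

theorem isJIso_mor (p : Expansion.{w} D X) (hX : X ∈ D) : IsJIso PUnit.{w + 1} p.mor := by
  obtain ⟨g, hg, -⟩ := p.universal (rud X) (fun _ => hX) (JHom.id _ _)
  refine ⟨g, hg, p.hom_ext p.inD ?_⟩
  rw [← JHom.comp_assoc, hg, JHom.id_comp, JHom.comp_id]

theorem jIso_rud_sys (J : Type t) [Preorder J] [IsDirected J (· ≤ ·)] [Nonempty J]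
    (p : Expansion.{w} D X) (hX : X ∈ D) : JIso J (rud.{w} X) p.sys :=
  ⟨indJHom J p.mor, isJIso_indJHom J p.mor (p.isJIso_mor hX)⟩

theorem nonempty_iso_iff_jIso_sys (J : Type t) [Preorder J] [IsDirected J (· ≤ ·)] [Nonempty J]
    {P Q : C} (pP : Expansion.{w} D P) (pQ : Expansion.{w} D Q) (hP : P ∈ D) (hQ : Q ∈ D) :
    Nonempty (P ≅ Q) ↔ JIso J pP.sys pQ.sys := by
  have iP := pP.jIso_rud_sys J hP
  have iQ := pQ.jIso_rud_sys J hQ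
  exact ⟨fun ⟨e⟩ => iP.symm.trans ((jIso_rud_of_iso.{t, w} J e).trans iQ),
    fun h => nonempty_iso_of_jIso_rud J (iP.trans (h.trans iQ.symm))⟩

end Expansion

theorem iso_iff_shape_iff_jshape_general {C : Type u} [Category.{v} C]
    (D : Set C)
    (J : Type t) [PartialOrder J] [IsDirected J (· ≤ ·)] [Nonempty J]
    (P Q : C) (hP : P ∈ D) (hQ : Q ∈ D)
    (pP : Expansion.{w} D P) (pQ : Expansion.{w} D Q) :
    (Nonempty (P ≅ Q) ↔ JIso PUnit.{w + 1} pP.sys pQ.sys) ∧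
    (Nonempty (P ≅ Q) ↔ JIso J pP.sys pQ.sys) :=
  ⟨pP.nonempty_iso_iff_jIso_sys PUnit.{w + 1} pQ hP hQ, pP.nonempty_iso_iff_jIso_sys J pQ hP hQ⟩

/-- STATEMENT 15 (Theorem 5): let `D` be a full pro-reflective subcategory of `C`
(witnessed by the given expansions) and `J` a directed partially ordered set.
For `P, Q ∈ D` the following are equivalent: (i) `P ≅ Q` in `D` (equivalently in
`C`); (ii) `P` and `Q` have the same shape, i.e. their `D`-expansions are
isomorphic in `pro-D` (the case `J = {1}`, modelled by `PUnit`); (iii) `P` and `Q`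
have the same `J`-shape, i.e. their `D`-expansions are isomorphic in `pro^J-D`. -/
theorem iso_iff_shape_iff_jshape {C : Type u} [Category.{v} C]
    (D : Set C) (E : ∀ Z : C, Expansion.{w} D Z)
    (J : Type t) [PartialOrder J] [IsDirected J (· ≤ ·)] [Nonempty J]
    (P Q : C) (hP : P ∈ D) (hQ : Q ∈ D)
    (pP : Expansion.{w} D P) (pQ : Expansion.{w} D Q) :
    (Nonempty (P ≅ Q) ↔ JIso PUnit.{w + 1} pP.sys pQ.sys) ∧
    (Nonempty (P ≅ Q) ↔ JIso J pP.sys pQ.sys) :=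
  iso_iff_shape_iff_jshape_general D J P Q hP hQ pP pQ
end

section
/- Let D be a full pro-reflective subcategory of a category C and let J be a directed partially ordered set. Let X, Y be objects of C, let q = (q_μ) : Y → Y = (Y_μ, q_{μμ'}, M) be a D-expansion of Y, and let H = (H_μ) : X → S^J(Y) be a morphism of pro-Sh^J_{(C,D)}, i.e. a family of J-shape morphisms H_μ : X → Y_μ with H_μ = S^J(q_{μμ'}) ∘ H_{μ'} for all μ ≤ μ'. Then there exists a unique morphism F : X → Y of Sh^J_{(C,D)} such that H_μ = S^J(q_μ) ∘ F for every μ ∈ M. -/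
open CategoryTheory

universe t w v u

variable {C : Type u} [Category.{v} C]

/-! A `J`-morphism into an inverse system `Y` is determined, up to `∼`, by its composites with
the projections `Y → (Y_μ)`; conversely, representatives of a family of `J`-morphisms
`X → (Y_μ)` compatible with the bonding morphisms of `Y` are themselves, index by index,
the components of a `J`-morphism `X → Y`. -/

section Projections

variable {J : Type t} [Preorder J] [IsDirected J (· ≤ ·)] [Nonempty J]
  {Λ M : Type w} [Preorder Λ] [IsDirected Λ (· ≤ ·)] [Preorder M]
  {X : InvSys C Λ} {Y : InvSys C M}

theorem jmorEquiv_comp_projMor_iff [IsDirected M (· ≤ ·)] (F G : JMor J X Y) (μ : M) :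
    JMorEquiv J X (rud (Y.obj μ)) (JMor.comp J F (projMor J Y μ))
        (JMor.comp J G (projMor J Y μ)) ↔
      ∃ (l : Λ) (hl : F.idx μ ≤ l) (hl' : G.idx μ ≤ l) (j : J),
        ∀ j' : J, j ≤ j' → X.bond hl ≫ F.app μ j' = X.bond hl' ≫ G.app μ j' := by
  simp only [JMorEquiv, JMor.comp, projMor, rud, Category.comp_id]
  exact ⟨fun h => h PUnit.unit, fun h _ => h⟩

theorem jmorEquiv_iff_forall_comp_projMor [IsDirected M (· ≤ ·)] (F G : JMor J X Y) :
    JMorEquiv J X Y F G ↔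
      ∀ μ, JMorEquiv J X (rud (Y.obj μ)) (JMor.comp J F (projMor J Y μ))
        (JMor.comp J G (projMor J Y μ)) :=
  forall_congr' fun μ => (jmorEquiv_comp_projMor_iff F G μ).symm

theorem JHom.ext_of_comp_projMor [IsDirected M (· ≤ ·)] {F G : JHom J X Y}
    (h : ∀ μ, JHom.comp J F ⟦projMor J Y μ⟧ = JHom.comp J G ⟦projMor J Y μ⟧) :
    F = G := by
  induction F, G using Quotient.inductionOn₂ with
  | h F G =>
    exact Quotient.sound <|
      (jmorEquiv_iff_forall_comp_projMor F G).2 fun μ => Quotient.exact (h μ)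

def JMor.IsCompatible (h : ∀ μ, JMor J X (rud (Y.obj μ))) : Prop :=
  ∀ ⦃μ μ' : M⦄ (hle : μ ≤ μ'),
    JMorEquiv J X (rud (Y.obj μ)) (h μ) (JMor.comp J (h μ') (constMor J (Y.bond hle)))

def JMor.ofCompatible (h : ∀ μ, JMor J X (rud (Y.obj μ))) (hh : JMor.IsCompatible h) :
    JMor J X Y where
  idx μ := (h μ).idx PUnit.unit
  app μ := (h μ).app PUnit.unit
  cond _ _ hle := hh hle PUnit.unit

theorem JMor.ofCompatible_comp_projMor [IsDirected M (· ≤ ·)]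
    (h : ∀ μ, JMor J X (rud (Y.obj μ))) (hh : JMor.IsCompatible h) (μ : M) :
    JMorEquiv J X (rud (Y.obj μ)) (JMor.comp J (JMor.ofCompatible h hh) (projMor J Y μ)) (h μ) :=
  fun ⟨⟩ => ⟨_, le_rfl, le_rfl, Classical.arbitrary J, fun _ _ => by
    simp only [JMor.comp, JMor.ofCompatible, projMor, rud, Category.comp_id]⟩

theorem JHom.exists_comp_projMor_eq [IsDirected M (· ≤ ·)]
    (H : ∀ μ, JHom J X (rud (Y.obj μ)))
    (hH : ∀ ⦃μ μ' : M⦄ (hle : μ ≤ μ'),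
      H μ = JHom.comp J (H μ') ⟦constMor J (Y.bond hle)⟧) :
    ∃ F : JHom J X Y, ∀ μ, JHom.comp J F ⟦projMor J Y μ⟧ = H μ := by
  have hcompat : JMor.IsCompatible fun μ => (H μ).out := by
    intro μ μ' hle
    have h := hH hle
    rw [← Quotient.out_eq (H μ), ← Quotient.out_eq (H μ')] at h
    exact Quotient.exact h
  refine ⟨⟦JMor.ofCompatible (fun μ => (H μ).out) hcompat⟧, fun μ => ?_⟩
  rw [← Quotient.out_eq (H μ)]
  exact Quotient.sound (JMor.ofCompatible_comp_projMor _ hcompat μ)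

end Projections

/-- STATEMENT 16 (Lemma 9): let `D ⊆ C` be a full pro-reflective subcategory,
`J` a directed partially ordered set, `X, Y ∈ C`, `pX` a `D`-expansion of `X` and
`qY = (q_μ) : Y → 𝒀` a `D`-expansion of `Y`. Let `H = (H_μ) : X → S^J(𝒀)` be a
morphism of `pro-Sh^J_{(C,D)}`, i.e. a family of `J`-shape morphisms
`H_μ : X → Y_μ` (realized in `pro^J-D` via the expansions `pX` and `1 : Y_μ → (Y_μ)`)
with `H_μ = S^J(q_{μμ'}) ∘ H_{μ'}` for all `μ ≤ μ'` (where `S^J(q_{μμ'})` is the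
class of the induced constant `J`-morphism `(Y_{μ'}) → (Y_μ)`). Then there is a
unique morphism `F : X → Y` of `Sh^J_{(C,D)}` with `H_μ = S^J(q_μ) ∘ F` for every
`μ` (where `S^J(q_μ) : 𝒀 → (Y_μ)` is the class of the projection `J`-morphism). -/
theorem continuity_for_D_expansion {C : Type u} [Category.{v} C]
    (D : Set C) (J : Type t) [PartialOrder J] [IsDirected J (· ≤ ·)] [Nonempty J]
    (X Y : C) (pX : Expansion.{w} D X) (qY : Expansion.{w} D Y)
    (H : ∀ μ : qY.Idx, JHom J pX.sys (rud (qY.sys.obj μ)))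
    (hH : ∀ ⦃μ μ' : qY.Idx⦄ (h : μ ≤ μ'),
      H μ = JHom.comp J (H μ') (⟦constMor J (qY.sys.bond h)⟧)) :
    ∃! F : JHom J pX.sys qY.sys,
      ∀ μ : qY.Idx, H μ = JHom.comp J F (⟦projMor J qY.sys μ⟧) := by
  obtain ⟨F, hF⟩ := JHom.exists_comp_projMor_eq H hH
  exact ⟨F, fun μ => (hF μ).symm,
    fun G hG => JHom.ext_of_comp_projMor fun μ => (hG μ).symm.trans (hF μ).symm⟩
end
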